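/- A finite simple graph G satisfies D(G, x) = x^n (x + 2)^n if and only if G is isomorphic to H ∘ K₁ for some graph H of order n. -/

import Mathlib

/-!
A set dominates `H ∘ K₁` exactly when it meets each pair formed by a vertex of `H` and its
pendant vertex, and each pair can be met in three ways, of weights `x, x, x²`; so
`D(H ∘ K₁, x) = (x² + 2x)ⁿ`.

Conversely, let `D(G, x) = xⁿ(x + 2)ⁿ`. The degree gives `|V| = 2n`, the vanishing low
coefficients say that no set of fewer than `n` vertices dominates, and reading off the top
coefficients by complements, all `2n` sets of size `2n - 1` dominate (so `G` has no isolated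
vertex) while exactly `C(2n, 2) - 4 C(n, 2) = n` sets of size `2n - 2` do not. A pair whose
complement does not dominate is a leaf together with its neighbour. No vertex `v` carries two
leaves: otherwise deleting `v` with its leaves leaves a graph without isolated vertices, which by
Ore's bound has a dominating set of at most half its order, and adding `v` back dominates `G`
with fewer than `n` vertices. Hence the `n` leaf pairs are disjoint and cover `V`, which exhibits
`G` as a corona over the subgraph induced on the supports of the leaves.
-/

open Polynomial

variable {V W : Type*}

/-- `S` is a dominating set of `G`. -/
def Dominates (G : SimpleGraph V) (S : Finset V) : Prop :=
  ∀ v, v ∉ S → ∃ u ∈ S, G.Adj u v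

open Classical in
/-- The domination polynomial of a finite simple graph. -/
noncomputable def domPoly [Fintype V] (G : SimpleGraph V) : Polynomial ℤ :=
  ∑ S : Finset V, if Dominates G S then (X : Polynomial ℤ) ^ S.card else 0

/-- The corona `G ∘ H`. -/
def corona (G : SimpleGraph V) (H : SimpleGraph W) : SimpleGraph (V ⊕ V × W) where
  Adj x y :=
    match x, y with
    | Sum.inl a, Sum.inl b => G.Adj a b
    | Sum.inl a, Sum.inr (b, _) => a = b
    | Sum.inr (b, _), Sum.inl a => a = b
    | Sum.inr (a, w), Sum.inr (b, w') => a = b ∧ H.Adj w w'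
  symm := by
    constructor
    rintro (a | ⟨a, w⟩) (b | ⟨b, w'⟩) h
    · exact G.adj_symm h
    · exact h
    · exact h
    · exact ⟨h.1.symm, H.adj_symm h.2⟩
  loopless := by
    constructor
    rintro (a | ⟨a, w⟩) h
    · exact G.irrefl h
    · exact H.irrefl h.2

open Finset SimpleGraph

lemma dominates_map_iff {G : SimpleGraph V} {G' : SimpleGraph W} (e : G ≃g G') {S : Finset V} :
    Dominates G' (S.map e.toEquiv.toEmbedding) ↔ Dominates G S := by
  refine (e.toEquiv.forall_congr fun {v} => ?_).symm
  simp only [mem_map, Equiv.coe_toEmbedding, EmbeddingLike.apply_eq_iff_eq, exists_eq_right,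
    exists_exists_and_eq_and]
  exact imp_congr_right fun _ => exists_congr fun _ => and_congr_right fun _ => e.map_adj_iff.symm

section DomPoly

variable [Fintype V]

open Classical in
lemma coeff_domPoly (G : SimpleGraph V) (k : ℕ) :
    (domPoly G).coeff k = #{S ∈ powersetCard k univ | Dominates G S} := by
  rw [domPoly, finsetSum_coeff, powersetCard_eq_filter, filter_filter, card_filter]
  push_cast
  refine sum_congr rfl fun S _ => ?_
  split_ifs <;> simp_all [coeff_X_pow, eq_comm]

lemma natDegree_domPoly (G : SimpleGraph V) : (domPoly G).natDegree = Fintype.card V := by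
  classical
  refine natDegree_eq_of_le_of_coeff_ne_zero ?_ ?_
  · rw [natDegree_le_iff_coeff_eq_zero]
    intro k hk
    rw [coeff_domPoly, powersetCard_eq_empty.mpr (by simpa using hk)]
    rfl
  · rw [coeff_domPoly, ← card_univ, powersetCard_self,
      filter_singleton, if_pos (show Dominates G univ from fun v hv => absurd (mem_univ v) hv)]
    simp

open Classical in
lemma coeff_domPoly_card_sub_add_card (G : SimpleGraph V) {j : ℕ} (hj : j ≤ Fintype.card V) :
    (domPoly G).coeff (Fintype.card V - j) + #{T ∈ powersetCard j univ | ¬Dominates G Tᶜ} =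
      (Fintype.card V).choose j := by
  have hcompl : #{S ∈ powersetCard (Fintype.card V - j) univ | Dominates G S} =
      #{T ∈ powersetCard j univ | Dominates G Tᶜ} := by
    refine card_nbij' compl compl ?_ ?_ (fun S _ => compl_compl S) (fun T _ => compl_compl T) <;>
      intro S hS <;> simp_all [card_compl]
    omega
  rw [coeff_domPoly, hcompl]
  exact_mod_cast (card_filter_add_card_filter_not _).trans (by simp)

lemma domPoly_congr [Fintype W] {G : SimpleGraph V} {G' : SimpleGraph W} (e : G ≃g G') :
    domPoly G = domPoly G' :=
  Fintype.sum_equiv e.toEquiv.finsetCongr _ _ fun S => by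
    rw [Equiv.finsetCongr_apply, card_map, dominates_map_iff]

end DomPoly

lemma sum_superset_pow_card {α R : Type*} [Fintype α] [DecidableEq α] [CommSemiring R]
    (s : Finset α) (x : R) : ∑ t with s ⊆ t, x ^ #t = x ^ #s * (x + 1) ^ #sᶜ := by
  have hIcc : ({t | s ⊆ t} : Finset (Finset α)) = Icc s univ := by ext; simp
  rw [hIcc, Icc_eq_image_powerset (subset_univ s), sum_image, ← compl_eq_univ_sdiff,
    ← sum_pow_mul_eq_add_pow, mul_sum]
  · refine sum_congr rfl fun t ht => ?_
    rw [card_union_of_disjoint (disjoint_of_subset_right (mem_powerset.mp ht) disjoint_compl_right),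
      pow_add, one_pow, mul_one]
  · intro t ht t' ht' (h : s ∪ t = s ∪ t')
    have hd : ∀ {u}, u ∈ ((univ \ s).powerset : Set (Finset α)) → Disjoint s u := fun hu =>
      disjoint_of_subset_right (mem_powerset.mp hu) disjoint_sdiff
    rw [← union_sdiff_cancel_left (hd ht), h, union_sdiff_cancel_left (hd ht')]

section Corona

variable {α : Type*} [Unique W] {H : SimpleGraph α}

lemma dominates_corona_top_iff {S : Finset (α ⊕ α × W)} :
    Dominates (corona H (⊤ : SimpleGraph W)) S ↔
      ∀ i, Sum.inl i ∈ S ∨ Sum.inr (i, default) ∈ S := by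
  constructor
  · intro h i
    by_contra! hi
    obtain ⟨u, hu, hadj⟩ := h _ hi.2
    rcases u with j | ⟨j, x⟩
    · obtain rfl : j = i := hadj
      exact hi.1 hu
    · exact (hadj : j = i ∧ (⊤ : SimpleGraph W).Adj x default).2.ne (Subsingleton.elim _ _)
  · rintro h (i | ⟨i, x⟩) hv
    · exact ⟨Sum.inr (i, default), (h i).resolve_left hv, rfl⟩
    · rw [Unique.eq_default x] at hv
      exact ⟨Sum.inl i, (h i).resolve_right hv, rfl⟩

lemma domPoly_corona_top [Fintype α] [Fintype W] :
    domPoly (corona H (⊤ : SimpleGraph W)) = X ^ Fintype.card α * (X + 2) ^ Fintype.card α := by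
  classical
  let e : Finset α × Finset α ≃ Finset (α ⊕ α × W) :=
    (Equiv.prodCongr (Equiv.refl _) (Equiv.prodUnique α W).symm.finsetCongr).trans
      sumEquiv.symm.toEquiv
  have he_card (A B : Finset α) : #(e (A, B)) = #A + #B := by simp [e]
  have he_dom (A B : Finset α) :
      Dominates (corona H (⊤ : SimpleGraph W)) (e (A, B)) ↔ Aᶜ ⊆ B := by
    rw [dominates_corona_top_iff]
    simp [e, subset_iff, or_iff_not_imp_left]
  have hterm (A : Finset α) : X ^ #A * (X ^ #Aᶜ * (X + 1) ^ #Aᶜᶜ) =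
      X ^ Fintype.card α * ((X + 1) ^ #A * 1 ^ (Fintype.card α - #A) : ℤ[X]) := by
    rw [compl_compl, one_pow, mul_one, ← mul_assoc, ← pow_add, card_add_card_compl]
  rw [domPoly, ← e.sum_comp, Fintype.sum_prod_type]
  simp only [he_card, he_dom, pow_add, ← sum_filter, ← mul_sum, sum_superset_pow_card]
  rw [sum_congr rfl fun A _ => hterm A, ← mul_sum, Fintype.sum_pow_mul_eq_add_pow, add_assoc,
    one_add_one_eq_two]

end Corona

section XPowMulXAddTwoPow

variable {n : ℕ}

lemma natDegree_X_pow_mul_X_add_two_pow : (X ^ n * (X + 2) ^ n : ℤ[X]).natDegree = 2 * n := by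
  compute_degree! <;> omega

lemma coeff_X_pow_mul_X_add_two_pow_of_lt {k : ℕ} (hk : k < n) :
    (X ^ n * (X + 2) ^ n : ℤ[X]).coeff k = 0 := by
  rw [coeff_X_pow_mul', if_neg hk.not_ge]

lemma coeff_X_pow_mul_X_add_two_pow_two_mul_sub {j : ℕ} (hj : j ≤ 2 * n) :
    (X ^ n * (X + 2) ^ n : ℤ[X]).coeff (2 * n - j) = n.choose j * 2 ^ j := by
  rcases le_or_gt j n with hjn | hnj
  · rw [coeff_X_pow_mul', if_pos (by omega), ← C_ofNat, coeff_X_add_C_pow,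
      show n - (2 * n - j - n) = j by omega, show 2 * n - j - n = n - j by omega,
      Nat.choose_symm hjn, mul_comm]
  · rw [coeff_X_pow_mul_X_add_two_pow_of_lt (by omega), Nat.choose_eq_zero_of_lt hnj]
    simp

end XPowMulXAddTwoPow

lemma two_mul_choose_two (n : ℕ) : (2 * n).choose 2 = 4 * n.choose 2 + n := by
  have h : ((2 * n).choose 2 : ℚ) = 4 * n.choose 2 + n := by
    rw [Nat.cast_choose_two, Nat.cast_choose_two]
    push_cast
    ring
  exact_mod_cast h

namespace SimpleGraph

variable {G : SimpleGraph V}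

lemma adj_iff_of_neighborSet_eq_singleton {w b : V} (h : G.neighborSet w = {b}) {u : V} :
    G.Adj w u ↔ u = b := by
  rw [← mem_neighborSet, h, Set.mem_singleton_iff]

lemma exists_subset_dominating_two_mul_card_le [DecidableEq V] (B : Finset V)
    (hB : ∀ v ∈ B, ∃ u ∈ B, G.Adj u v) :
    ∃ S ⊆ B, 2 * #S ≤ #B ∧ ∀ v ∈ B \ S, ∃ u ∈ S, G.Adj u v := by
  classical
  set I := B.powerset.filter fun S : Finset V => G.IsIndepSet (S : Set V)
  obtain ⟨S, hS⟩ := exists_maximal (s := I) ⟨∅, by simp [I]⟩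
  obtain ⟨hSB, hSind⟩ : S ⊆ B ∧ G.IsIndepSet (S : Set V) := by simpa [I] using hS.prop
  have hdom : ∀ v ∈ B \ S, ∃ u ∈ S, G.Adj u v := by
    intro v hv
    rw [mem_sdiff] at hv
    by_contra! hno
    have hins : insert v S ∈ I := by
      simp only [I, mem_filter, mem_powerset, coe_insert, insert_subset_iff]
      exact ⟨⟨hv.1, hSB⟩, Set.Pairwise.insert hSind fun u hu _ =>
        ⟨fun h => hno u hu h.symm, hno u hu⟩⟩
    exact hv.2 (hS.eq_of_ge hins (subset_insert v S) ▸ mem_insert_self v S)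
  have hdom' : ∀ v ∈ B \ (B \ S), ∃ u ∈ B \ S, G.Adj u v := by
    intro v hv
    rw [Finset.sdiff_sdiff_eq_self hSB] at hv
    obtain ⟨u, huB, huv⟩ := hB v (hSB hv)
    exact ⟨u, mem_sdiff.mpr ⟨huB, fun huS => hSind huS hv (G.ne_of_adj huv) huv⟩, huv⟩
  have hcard : #(B \ S) + #S = #B := card_sdiff_add_card_eq_card hSB
  rcases le_total #S #(B \ S) with h | h
  · exact ⟨S, hSB, by omega, hdom⟩
  · exact ⟨B \ S, sdiff_subset, by omega, hdom'⟩

lemma exists_dominates_two_mul_card_lt_of_two_leaves [Fintype V] (hG : ∀ v, ∃ u, G.Adj v u)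
    {v w w' : V} (hww' : w ≠ w') (hw : G.neighborSet w = {v}) (hw' : G.neighborSet w' = {v}) :
    ∃ S, Dominates G S ∧ 2 * #S < Fintype.card V := by
  classical
  set A : Finset V := insert v ({u | G.neighborSet u = {v}} : Finset V)
  have mem_A_of_leaf {u : V} (hu : G.neighborSet u = {v}) : u ∈ A :=
    mem_insert_of_mem (mem_filter.mpr ⟨mem_univ u, hu⟩)
  have hB : ∀ z ∈ Aᶜ, ∃ u ∈ Aᶜ, G.Adj u z := by
    intro z hz
    rw [mem_compl] at hz
    by_contra! h
    have hz_nbr : ∀ y, G.Adj z y → y = v := fun y hzy => by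
      have hyA : y ∈ A := by_contra fun hy => h y (mem_compl.mpr hy) hzy.symm
      rcases mem_insert.mp hyA with rfl | hy
      · rfl
      · have hzv : z = v :=
          (adj_iff_of_neighborSet_eq_singleton (mem_filter.mp hy).2).mp hzy.symm
        exact absurd (hzv ▸ mem_insert_self v _) hz
    obtain ⟨y, hzy⟩ := hG z
    refine hz (mem_A_of_leaf (Set.ext fun u => ⟨hz_nbr u, fun hu => ?_⟩))
    exact hu ▸ hz_nbr y hzy ▸ hzy
  obtain ⟨S, -, hScard, hSdom⟩ := exists_subset_dominating_two_mul_card_le Aᶜ hB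
  have hA : 3 ≤ #A := by
    have hvw : v ≠ w := (G.ne_of_adj ((adj_iff_of_neighborSet_eq_singleton hw).mpr rfl)).symm
    have hvw' : v ≠ w' := (G.ne_of_adj ((adj_iff_of_neighborSet_eq_singleton hw').mpr rfl)).symm
    calc 3 = #{v, w, w'} := by simp [hvw, hvw', hww']
      _ ≤ #A := card_le_card <| insert_subset (mem_insert_self v _) <|
        insert_subset (mem_A_of_leaf hw) (singleton_subset_iff.mpr (mem_A_of_leaf hw'))
  refine ⟨insert v S, fun z hz => ?_, ?_⟩
  · by_cases hzA : z ∈ A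
    · have hzv : z ≠ v := fun h => hz (h ▸ mem_insert_self v S)
      have hz' : G.neighborSet z = {v} := by simpa [A, hzv] using hzA
      exact ⟨v, mem_insert_self v S, ((adj_iff_of_neighborSet_eq_singleton hz').mpr rfl).symm⟩
    · obtain ⟨u, hu, huz⟩ :=
        hSdom z (mem_sdiff.mpr ⟨mem_compl.mpr hzA, fun h => hz (mem_insert_of_mem h)⟩)
      exact ⟨u, mem_insert_of_mem hu, huz⟩
  · have := card_insert_le v S
    have := card_compl A
    have := card_le_univ A
    omega

lemma exists_leaf_of_not_dominates_compl [Fintype V] [DecidableEq V] (hG : ∀ v, ∃ u, G.Adj v u)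
    {e : Finset V} (he : #e = 2) (hnd : ¬Dominates G eᶜ) :
    ∃ w b, e = {w, b} ∧ G.neighborSet w = {b} := by
  simp only [Dominates, mem_compl, not_forall, not_not, not_exists, not_and] at hnd
  obtain ⟨w, hw, hnbr⟩ := hnd
  have hsub (u : V) (hwu : G.Adj w u) : u ∈ e := by_contra fun hu => hnbr u hu hwu.symm
  obtain ⟨b, hwb⟩ := hG w
  have heq : e = {w, b} := by
    refine (eq_of_subset_of_card_le ?_ ?_).symm
    · exact insert_subset hw (singleton_subset_iff.mpr (hsub b hwb))
    · rw [he, card_pair (G.ne_of_adj hwb)]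
  refine ⟨w, b, heq, Set.ext fun u => ⟨fun hwu => ?_, fun hu => hu ▸ hwb⟩⟩
  have hu := hsub u hwu
  rw [heq, mem_insert, mem_singleton] at hu
  exact hu.resolve_left (G.ne_of_adj hwu).symm

variable {α : Type*} {w b : α → V}

lemma injective_sum_elim_of_leaves [DecidableEq V] (hw : ∀ i, G.neighborSet (w i) = {b i})
    (hpair : Function.Injective fun i => ({w i, b i} : Finset V))
    (hleaf : ∀ x y v, G.neighborSet x = {v} → G.neighborSet y = {v} → x = y) :
    Function.Injective (Sum.elim b w) := by
  have hadj (i : α) : G.Adj (w i) (b i) := (adj_iff_of_neighborSet_eq_singleton (hw i)).mpr rfl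
  have hww {i j : α} (h : w i = w j) : i = j := by
    have hb : b i = b j := Set.singleton_injective ((hw i).symm.trans (h ▸ hw j))
    exact hpair (by simp only [h, hb])
  have hbb {i j : α} (h : b i = b j) : i = j := hww (hleaf _ _ _ (hw i) (h ▸ hw j))
  have hbw {i j : α} (h : b i = w j) : False := by
    have hwi : w i = b j := (adj_iff_of_neighborSet_eq_singleton (hw j)).mp (h ▸ hadj i).symm
    have hij : i = j := hpair (by simp only [hwi, h, pair_comm])
    exact G.ne_of_adj (hadj j) (hij ▸ h).symm
  rintro (i | i) (j | j) h <;>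
    simp only [Sum.elim_inl, Sum.elim_inr, Sum.inl.injEq, Sum.inr.injEq, reduceCtorEq] at h ⊢
  exacts [hbb h, hbw h, hbw h.symm, hww h]

lemma nonempty_iso_corona_top_of_bijective [Unique W] (hw : ∀ i, G.neighborSet (w i) = {b i})
    (hbij : Function.Bijective (Sum.elim b w)) :
    Nonempty (G ≃g corona (G.comap b) (⊤ : SimpleGraph W)) := by
  let e : α ⊕ α × W ≃ V :=
    (Equiv.sumCongr (Equiv.refl α) (Equiv.prodUnique α W)).trans (Equiv.ofBijective _ hbij)
  have hb : Function.Injective b := hbij.injective.comp Sum.inl_injective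
  have hwb (i j : α) : w i ≠ b j := fun h => Sum.inr_ne_inl (hbij.injective h)
  have hadj (i : α) {u : V} : G.Adj (w i) u ↔ u = b i :=
    adj_iff_of_neighborSet_eq_singleton (hw i)
  refine ⟨Iso.symm ⟨e, fun {x y} => ?_⟩⟩
  rcases x with i | ⟨i, x⟩ <;> rcases y with j | ⟨j, y⟩
  · exact Iff.rfl
  · change G.Adj (b i) (w j) ↔ i = j
    rw [G.adj_comm, hadj, hb.eq_iff, eq_comm]
  · change G.Adj (w i) (b j) ↔ j = i
    rw [hadj, hb.eq_iff]
  · change G.Adj (w i) (w j) ↔ i = j ∧ (⊤ : SimpleGraph W).Adj x y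
    rw [hadj, Subsingleton.elim x y, top_adj, ne_self_iff_false, and_false, iff_false]
    exact hwb j i

end SimpleGraph

section DomPolyEq

variable [Fintype V] {G : SimpleGraph V} {n : ℕ} (hG : domPoly G = X ^ n * (X + 2) ^ n)
include hG

lemma card_eq_two_mul_of_domPoly_eq : Fintype.card V = 2 * n := by
  rw [← natDegree_domPoly G, hG, natDegree_X_pow_mul_X_add_two_pow]

lemma le_card_of_dominates_of_domPoly_eq {S : Finset V} (hS : Dominates G S) : n ≤ #S := by
  classical
  by_contra! h
  have h0 := coeff_X_pow_mul_X_add_two_pow_of_lt h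
  rw [← hG, coeff_domPoly, Nat.cast_eq_zero, card_eq_zero, filter_eq_empty_iff] at h0
  exact h0 (mem_powersetCard.mpr ⟨subset_univ S, rfl⟩) hS

open Classical in
lemma card_not_dominates_compl_add_of_domPoly_eq {j : ℕ} (hj : j ≤ 2 * n) :
    #{T ∈ powersetCard j univ | ¬Dominates G Tᶜ} + n.choose j * 2 ^ j = (2 * n).choose j := by
  have h := coeff_domPoly_card_sub_add_card G ((card_eq_two_mul_of_domPoly_eq hG).symm ▸ hj)
  rw [card_eq_two_mul_of_domPoly_eq hG, hG, coeff_X_pow_mul_X_add_two_pow_two_mul_sub hj] at h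
  exact_mod_cast (add_comm _ _).trans h

lemma exists_adj_of_domPoly_eq (v : V) : ∃ u, G.Adj v u := by
  classical
  have hn : 1 ≤ n := by
    have := Fintype.card_pos_iff.mpr ⟨v⟩
    rw [card_eq_two_mul_of_domPoly_eq hG] at this
    omega
  have h := card_not_dominates_compl_add_of_domPoly_eq hG (j := 1) (by omega)
  rw [Nat.choose_one_right, Nat.choose_one_right, pow_one, mul_comm, add_eq_right, card_eq_zero,
    filter_eq_empty_iff] at h
  have hv := not_not.mp (h (mem_powersetCard.mpr ⟨subset_univ _, card_singleton v⟩))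
  obtain ⟨u, -, huv⟩ := hv v (by simp)
  exact ⟨u, huv.symm⟩

lemma eq_of_neighborSet_eq_singleton_of_domPoly_eq {x y v : V} (hx : G.neighborSet x = {v})
    (hy : G.neighborSet y = {v}) : x = y := by
  by_contra hxy
  obtain ⟨S, hS, hcard⟩ :=
    exists_dominates_two_mul_card_lt_of_two_leaves (exists_adj_of_domPoly_eq hG) hxy hx hy
  have := le_card_of_dominates_of_domPoly_eq hG hS
  rw [card_eq_two_mul_of_domPoly_eq hG] at hcard
  omega

open Classical in
lemma card_pairs_not_dominates_compl_of_domPoly_eq :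
    #{e ∈ powersetCard 2 univ | ¬Dominates G eᶜ} = n := by
  rcases Nat.eq_zero_or_pos n with rfl | hn
  · rw [powersetCard_eq_empty.mpr (by simp [card_eq_two_mul_of_domPoly_eq hG])]
    rfl
  · have h := card_not_dominates_compl_add_of_domPoly_eq hG (j := 2) (by omega)
    rw [two_mul_choose_two] at h
    omega

theorem exists_iso_corona_of_domPoly_eq :
    ∃ H : SimpleGraph (Fin n), Nonempty (G ≃g corona H (⊤ : SimpleGraph (Fin 1))) := by
  classical
  set P : Finset (Finset V) := {e ∈ powersetCard 2 univ | ¬Dominates G eᶜ}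
  have hP (e : P) :
      ∃ wb : V × V, (e : Finset V) = {wb.1, wb.2} ∧ G.neighborSet wb.1 = {wb.2} := by
    obtain ⟨he2, hnd⟩ := mem_filter.mp e.2
    obtain ⟨w, b, h⟩ := exists_leaf_of_not_dominates_compl (exists_adj_of_domPoly_eq hG)
      (mem_powersetCard.mp he2).2 hnd
    exact ⟨(w, b), h⟩
  choose f hf using hP
  let σ : Fin n ≃ P :=
    (P.equivFinOfCardEq (card_pairs_not_dominates_compl_of_domPoly_eq hG)).symm
  let w (i : Fin n) : V := (f (σ i)).1
  let b (i : Fin n) : V := (f (σ i)).2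
  have hw (i : Fin n) : G.neighborSet (w i) = {b i} := (hf (σ i)).2
  have hpair : Function.Injective fun i => ({w i, b i} : Finset V) := fun i j h =>
    σ.injective (Subtype.ext ((hf (σ i)).1.trans (h.trans (hf (σ j)).1.symm)))
  have hinj : Function.Injective (Sum.elim b w) := injective_sum_elim_of_leaves hw hpair
    fun _ _ _ => eq_of_neighborSet_eq_singleton_of_domPoly_eq hG
  have hbij : Function.Bijective (Sum.elim b w) := by
    rw [Fintype.bijective_iff_injective_and_card]
    refine ⟨hinj, ?_⟩
    simp [card_eq_two_mul_of_domPoly_eq hG, two_mul]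
  exact ⟨G.comap b, nonempty_iso_corona_top_of_bijective hw hbij⟩

end DomPolyEq

/-- `D(G,x) = xⁿ(x+2)ⁿ` iff `G ≅ H ∘ K₁` for some graph `H` of
order `n`. -/
theorem domPoly_eq_iff_corona_K1 (n : ℕ) {V : Type*} [Fintype V] (G : SimpleGraph V) :
    domPoly G = X ^ n * (X + 2) ^ n ↔
      ∃ H : SimpleGraph (Fin n),
        Nonempty (G ≃g corona H (⊤ : SimpleGraph (Fin 1))) := by
  refine ⟨exists_iso_corona_of_domPoly_eq, ?_⟩
  rintro ⟨H, ⟨e⟩⟩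
  rw [domPoly_congr e, domPoly_corona_top, Fintype.card_fin]
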